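/- With ψ(x,y) = (1/κ)·arcsinh(κx/y), the function I¹(x,y) = ψ(x,y)^{-2}·( ln( (y/x)·ψ(x,y)·(1 + κ²x²/y²)^{1/4} ) + η μ x²/2 ) satisfies the interior boundary condition lim_{x→0} I¹(x,y) = κ²/12 + η μ y²/2 for every fixed y > 0. -/

import Mathlib

open Filter

noncomputable def psiHW (κ x y : ℝ) : ℝ := (1 / κ) * Real.arsinh (κ * x / y)

noncomputable def I1HW (κ η μ x y : ℝ) : ℝ :=
  (psiHW κ x y) ^ (-2 : ℤ) *
    (Real.log ((y / x) * psiHW κ x y * (1 + κ ^ 2 * x ^ 2 / y ^ 2) ^ ((1 : ℝ) / 4))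
      + η * μ * x ^ 2 / 2)

/-!
Put `t = κ x / y`. Then `I¹ = κ² (t / arsinh t)² (log (arsinh t / t) / t² + ¼ log (1 + t²) / t²
+ η μ y² / (2κ²))`. Since `arsinh t = t - t³/6 + o(t³)` (L'Hôpital), and `log v / w → L` whenever
`v → 1` and `(v - 1) / w → L`, the two logarithmic quotients tend to `-1/6` and `1`, giving
`κ² (-1/6 + 1/4) + η μ y² / 2`.
-/

open Topology Real

theorem Filter.Tendsto.log_div_of_tendsto_sub_one_div {α : Type*} {l : Filter α}
    {f g : α → ℝ} {L : ℝ} (hf : Tendsto f l (𝓝 1))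
    (h : Tendsto (fun a ↦ (f a - 1) / g a) l (𝓝 L)) :
    Tendsto (fun a ↦ Real.log (f a) / g a) l (𝓝 L) := by
  have hslope : Tendsto (fun a ↦ dslope Real.log 1 (f a)) l (𝓝 1) := by
    have := (continuousAt_dslope_same.2 (Real.differentiableAt_log one_ne_zero)).tendsto.comp hf
    rwa [dslope_same, Real.deriv_log, inv_one] at this
  -- `log v = (v - 1) * dslope Real.log 1 v` holds also at `v = 1`
  refine (mul_one L ▸ h.mul hslope).congr fun a ↦ ?_
  rw [div_mul_eq_mul_div, ← smul_eq_mul, sub_smul_dslope, Real.log_one, sub_zero]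

theorem Real.tendsto_arsinh_div_self : Tendsto (fun t ↦ arsinh t / t) (𝓝[≠] 0) (𝓝 1) := by
  have := (hasDerivAt_arsinh 0).tendsto_slope_zero
  simpa [arsinh_zero, div_eq_inv_mul] using this

theorem Real.tendsto_arsinh_sub_self_div_pow_three :
    Tendsto (fun t ↦ (arsinh t - t) / t ^ 3) (𝓝[≠] 0) (𝓝 (-(1 / 6))) := by
  have hquot : ∀ t : ℝ, t ≠ 0 → ((√(1 + t ^ 2))⁻¹ - 1) / (3 * t ^ 2)
      = -(1 / (3 * √(1 + t ^ 2) * (1 + √(1 + t ^ 2)))) := by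
    intro t ht
    have hs : 0 < √(1 + t ^ 2) := by positivity
    have hsq : √(1 + t ^ 2) ^ 2 = 1 + t ^ 2 := sq_sqrt (by positivity)
    field_simp
    nlinarith
  have hquot_lim : Tendsto (fun t ↦ -(1 / (3 * √(1 + t ^ 2) * (1 + √(1 + t ^ 2)))))
      (𝓝[≠] 0) (𝓝 (-(1 / 6))) := by
    refine (Continuous.tendsto' ?_ 0 _ (by norm_num)).mono_left nhdsWithin_le_nhds
    exact (continuous_const.div (by fun_prop) fun t ↦ by positivity).neg
  refine HasDerivAt.lhopital_zero_nhdsNE (f' := fun t ↦ (√(1 + t ^ 2))⁻¹ - 1)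
    (g' := fun t ↦ 3 * t ^ 2) (.of_forall fun t ↦ (hasDerivAt_arsinh t).sub (hasDerivAt_id t))
    (.of_forall fun t ↦ by simpa using hasDerivAt_pow 3 t) ?_ ?_ ?_ ?_
  · filter_upwards [self_mem_nhdsWithin] with t (ht : t ≠ 0)
    positivity
  · exact ((continuous_arsinh.sub continuous_id).tendsto' 0 0 (by simp)).mono_left
      nhdsWithin_le_nhds
  · exact ((continuous_pow 3).tendsto' 0 0 (by simp)).mono_left nhdsWithin_le_nhds
  · refine hquot_lim.congr' ?_
    filter_upwards [self_mem_nhdsWithin] with t (ht : t ≠ 0)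
    exact (hquot t ht).symm

theorem Real.tendsto_log_arsinh_div_self_div_sq :
    Tendsto (fun t ↦ log (arsinh t / t) / t ^ 2) (𝓝[≠] 0) (𝓝 (-(1 / 6))) := by
  refine Real.tendsto_arsinh_div_self.log_div_of_tendsto_sub_one_div
    (Real.tendsto_arsinh_sub_self_div_pow_three.congr' ?_)
  filter_upwards [self_mem_nhdsWithin] with t (ht : t ≠ 0)
  rw [div_sub_one ht, div_div, ← pow_succ']

theorem Real.tendsto_log_one_add_sq_div_sq :
    Tendsto (fun t ↦ log (1 + t ^ 2) / t ^ 2) (𝓝[≠] 0) (𝓝 1) := by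
  have hsq : Tendsto (fun t : ℝ ↦ 1 + t ^ 2) (𝓝[≠] 0) (𝓝 1) :=
    ((continuous_const.add (continuous_pow 2)).tendsto' 0 1 (by simp)).mono_left
      nhdsWithin_le_nhds
  refine hsq.log_div_of_tendsto_sub_one_div (tendsto_const_nhds.congr' ?_)
  filter_upwards [self_mem_nhdsWithin] with t (ht : t ≠ 0)
  simp [ht]

theorem Real.arsinh_div_self_pos {t : ℝ} (ht : t ≠ 0) : 0 < arsinh t / t := by
  rcases ht.lt_or_gt with h | h
  · exact div_pos_of_neg_of_neg (arsinh_neg_iff.2 h) h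
  · exact div_pos (arsinh_pos_iff.2 h) h

theorem I1HW_eq {κ η μ x y t : ℝ} (hκ : κ ≠ 0) (hx : x ≠ 0) (hy : y ≠ 0) (ht : κ * x / y = t) :
    I1HW κ η μ x y = κ ^ 2 * ((arsinh t / t)⁻¹) ^ 2 *
      (log (arsinh t / t) / t ^ 2 + 1 / 4 * (log (1 + t ^ 2) / t ^ 2)
        + η * μ * y ^ 2 / (2 * κ ^ 2)) := by
  have ht0 : t ≠ 0 := ht ▸ by positivity
  have hψ : y / x * psiHW κ x y = arsinh t / t := by
    rw [psiHW, ht, ← ht]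
    field_simp
  have hsq : κ ^ 2 * x ^ 2 / y ^ 2 = t ^ 2 := by
    rw [← ht]
    ring
  have hx2 : x ^ 2 = (t * y / κ) ^ 2 := by
    rw [← ht]
    field_simp
  rw [I1HW, hψ, hsq, log_mul (arsinh_div_self_pos ht0).ne' (by positivity),
    log_rpow (by positivity), zpow_neg, zpow_two, psiHW, ht, hx2]
  have hA := (arsinh_div_self_pos ht0).ne'
  field_simp

/-- Interior boundary condition: `I¹(x,y) → κ²/12 + η μ y²/2` as `x → 0`. -/
theorem I1_interior_boundary (κ η μ : ℝ) (hκ : 0 < κ) (y : ℝ) (hy : 0 < y) :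
    Tendsto (fun x : ℝ => I1HW κ η μ x y) (nhdsWithin 0 {(0 : ℝ)}ᶜ)
      (nhds (κ ^ 2 / 12 + η * μ * y ^ 2 / 2)) := by
  have hscale : Tendsto (fun x ↦ κ * x / y) (𝓝[≠] 0) (𝓝[≠] 0) := by
    have h := (Homeomorph.mulLeft₀ (κ / y) (by positivity)).map_punctured_nhds_eq 0
    simp only [Homeomorph.coe_mulLeft₀, mul_zero] at h
    have h' : Tendsto (κ / y * ·) (𝓝[≠] 0) (𝓝[≠] 0) := h.le
    simpa only [mul_div_right_comm] using h'
  have hlim := (((tendsto_arsinh_div_self.inv₀ one_ne_zero).pow 2).const_mul (κ ^ 2)).mul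
    ((tendsto_log_arsinh_div_self_div_sq.add
      (tendsto_log_one_add_sq_div_sq.const_mul (1 / 4))).add_const (η * μ * y ^ 2 / (2 * κ ^ 2)))
  rw [show κ ^ 2 / 12 + η * μ * y ^ 2 / 2 = κ ^ 2 * (1⁻¹) ^ 2 *
      (-(1 / 6) + 1 / 4 * 1 + η * μ * y ^ 2 / (2 * κ ^ 2)) by field_simp; ring]
  refine (hlim.comp hscale).congr' ?_
  filter_upwards [self_mem_nhdsWithin] with x (hx : x ≠ 0)
  exact (I1HW_eq hκ.ne' hx hy.ne' rfl).symm
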